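/- Let R be an extensional relational doctrine on a category C. Then an arrow q : X → Y of C is a split epimorphism which is an effective descent quotient arrow (of its kernel gr(q) ; gr(q)°) if and only if q is a split epimorphism and surjective. -/

import Mathlib

open CategoryTheory

universe w w' v v' u u'

/-- A relational doctrine on a category `C` with fibres `P X Y` (posets):
a contravariant functor `(C^op × C^op) → Pos` with identities, composition and converse. -/
structure RelDoctrine (C : Type u) [Category.{v} C] (P : C → C → Type w)
    [∀ X Y : C, PartialOrder (P X Y)] where
  reidx : ∀ {A X B Y : C}, (A ⟶ X) → (B ⟶ Y) → P X Y → P A B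
  reidx_mono : ∀ {A X B Y : C} (f : A ⟶ X) (g : B ⟶ Y), Monotone (reidx f g)
  reidx_id : ∀ {X Y : C} (α : P X Y), reidx (𝟙 X) (𝟙 Y) α = α
  reidx_comp :
    ∀ {A X X' B Y Y' : C} (f : A ⟶ X) (f' : X ⟶ X') (g : B ⟶ Y) (g' : Y ⟶ Y') (α : P X' Y'),
      reidx (f ≫ f') (g ≫ g') α = reidx f g (reidx f' g' α)
  d : ∀ X : C, P X X
  comp : ∀ {X Y Z : C}, P X Y → P Y Z → P X Z
  comp_mono : ∀ {X Y Z : C} {α α' : P X Y} {β β' : P Y Z},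
      α ≤ α' → β ≤ β' → comp α β ≤ comp α' β'
  conv : ∀ {X Y : C}, P X Y → P Y X
  conv_mono : ∀ {X Y : C} {α α' : P X Y}, α ≤ α' → conv α ≤ conv α'
  d_le_reidx : ∀ {X Y : C} (f : X ⟶ Y), d X ≤ reidx f f (d Y)
  comp_reidx_le : ∀ {X A Y B Z W : C} (f : X ⟶ A) (g : Y ⟶ B) (h : Z ⟶ W)
      (α : P A B) (β : P B W),
      comp (reidx f g α) (reidx g h β) ≤ reidx f h (comp α β)
  conv_reidx_le : ∀ {X A Y B : C} (f : X ⟶ A) (g : Y ⟶ B) (α : P A B),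
      conv (reidx f g α) ≤ reidx g f (conv α)
  comp_assoc : ∀ {X Y Z W : C} (α : P X Y) (β : P Y Z) (γ : P Z W),
      comp α (comp β γ) = comp (comp α β) γ
  d_comp : ∀ {X Y : C} (α : P X Y), comp (d X) α = α
  comp_d : ∀ {X Y : C} (α : P X Y), comp α (d Y) = α
  conv_comp : ∀ {X Y Z : C} (α : P X Y) (β : P Y Z),
      conv (comp α β) = comp (conv β) (conv α)
  conv_d : ∀ X : C, conv (d X) = d X
  conv_conv : ∀ {X Y : C} (α : P X Y), conv (conv α) = α

namespace RelDoctrine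

variable {C : Type u} [Category.{v} C] {P : C → C → Type w} [∀ X Y : C, PartialOrder (P X Y)]

/-- The graph of an arrow `f : X ⟶ Y` is `R(f, id_Y)(d_Y)`. -/
def gr (D : RelDoctrine C P) {X Y : C} (f : X ⟶ Y) : P X Y :=
  D.reidx f (𝟙 Y) (D.d Y)

/-- `α` is functional: `α° ; α ≤ d_Y`. -/
def Functional (D : RelDoctrine C P) {X Y : C} (α : P X Y) : Prop :=
  D.comp (D.conv α) α ≤ D.d Y

/-- `α` is total: `d_X ≤ α ; α°`. -/
def Total (D : RelDoctrine C P) {X Y : C} (α : P X Y) : Prop :=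
  D.d X ≤ D.comp α (D.conv α)

/-- `α` is injective: `α ; α° ≤ d_X`. -/
def InjectiveRel (D : RelDoctrine C P) {X Y : C} (α : P X Y) : Prop :=
  D.comp α (D.conv α) ≤ D.d X

/-- `α` is surjective: `d_Y ≤ α° ; α`. -/
def SurjectiveRel (D : RelDoctrine C P) {X Y : C} (α : P X Y) : Prop :=
  D.d Y ≤ D.comp (D.conv α) α

/-- The kernel of an arrow `f` is `gr(f) ; gr(f)°`. -/
def kernelOf (D : RelDoctrine C P) {X Y : C} (f : X ⟶ Y) : P X X :=
  D.comp (D.gr f) (D.conv (D.gr f))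

/-- An `R`-equivalence relation: reflexive, symmetric, transitive. -/
def IsEquivRel (D : RelDoctrine C P) {X : C} (ρ : P X X) : Prop :=
  D.d X ≤ ρ ∧ D.conv ρ ≤ ρ ∧ D.comp ρ ρ ≤ ρ

/-- `q : X ⟶ W` is a quotient arrow of the equivalence relation `ρ` on `X`. -/
def IsQuotientArrow (D : RelDoctrine C P) {X W : C} (ρ : P X X) (q : X ⟶ W) : Prop :=
  ρ ≤ D.kernelOf q ∧
    ∀ (Z : C) (f : X ⟶ Z), ρ ≤ D.kernelOf f → ∃! h : W ⟶ Z, f = q ≫ h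

/-- The quotient arrow `q` of `ρ` is effective: `ρ = gr(q) ; gr(q)°`. -/
def Effective (D : RelDoctrine C P) {X W : C} (ρ : P X X) (q : X ⟶ W) : Prop :=
  ρ = D.kernelOf q

/-- The arrow `q` is descent: `d_W ≤ gr(q)° ; gr(q)`. -/
def Descent (D : RelDoctrine C P) {X W : C} (q : X ⟶ W) : Prop :=
  D.d W ≤ D.comp (D.conv (D.gr q)) (D.gr q)

/-- `D` has quotients: every equivalence relation admits an effective descent quotient arrow. -/
def HasQuotients (D : RelDoctrine C P) : Prop :=
  ∀ (X : C) (ρ : P X X), D.IsEquivRel ρ →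
    ∃ (W : C) (q : X ⟶ W), D.IsQuotientArrow ρ q ∧ D.Effective ρ q ∧ D.Descent q

/-- `f ≐ g` : the arrows `f, g` are `R`-equal, i.e. `d_X ≤ R(f,g)(d_Y)`. -/
def RExtEq (D : RelDoctrine C P) {X Y : C} (f g : X ⟶ Y) : Prop :=
  D.d X ≤ D.reidx f g (D.d Y)

/-- `D` is extensional: `R`-equal arrows are equal. -/
def Extensional (D : RelDoctrine C P) : Prop :=
  ∀ (X Y : C) (f g : X ⟶ Y), D.RExtEq f g → f = g

/-- `D` is balanced: every bijective arrow is an isomorphism. -/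
def BalancedDoc (D : RelDoctrine C P) : Prop :=
  ∀ (X Y : C) (f : X ⟶ Y), D.InjectiveRel (D.gr f) → D.SurjectiveRel (D.gr f) → IsIso f

/-- `Q` is `R`-projective with respect to quotient arrows. -/
def ProjectiveObj (D : RelDoctrine C P) (Q : C) : Prop :=
  ∀ (X Y : C) (f : Q ⟶ Y) (q : X ⟶ Y) (ρ : P X X),
    D.IsEquivRel ρ → D.IsQuotientArrow ρ q → ∃ h : Q ⟶ X, f = h ≫ q

/-- Descent data with respect to equivalence relations `ρ` and `σ` : `ρ° ; α ; σ ≤ α`. -/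
def Des (D : RelDoctrine C P) {X Y : C} (ρ : P X X) (σ : P Y Y) (α : P X Y) : Prop :=
  D.comp (D.comp (D.conv ρ) α) σ ≤ α

/-- The rule of unique choice: every functional total relation contains the graph of an arrow. -/
def RUC (D : RelDoctrine C P) : Prop :=
  ∀ (X Y : C) (α : P X Y), D.Functional α → D.Total α → ∃ f : X ⟶ Y, D.gr f ≤ α

end RelDoctrine

namespace RelDoctrine

variable {C : Type u} [Category.{v} C] {P : C → C → Type w} [∀ X Y : C, PartialOrder (P X Y)]
  (D : RelDoctrine C P)

theorem conv_reidx {A X B Y : C} (f : A ⟶ X) (g : B ⟶ Y) (α : P X Y) :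
    D.conv (D.reidx f g α) = D.reidx g f (D.conv α) := by
  apply le_antisymm (D.conv_reidx_le f g α)
  simpa only [D.conv_conv] using D.conv_mono (D.conv_reidx_le g f (D.conv α))

theorem conv_gr {X Y : C} (f : X ⟶ Y) : D.conv (D.gr f) = D.reidx (𝟙 Y) f (D.d Y) := by
  rw [gr, conv_reidx, conv_d]

theorem kernelOf_le_reidx {X Z : C} (f : X ⟶ Z) : D.kernelOf f ≤ D.reidx f f (D.d Z) := by
  rw [kernelOf, conv_gr, gr]
  simpa only [d_comp] using D.comp_reidx_le f (𝟙 Z) f (D.d Z) (D.d Z)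

theorem d_le_reidx_kernelOf {A X Y : C} {q : X ⟶ Y} {f₁ f₂ : A ⟶ X} (h : f₁ ≫ q = f₂ ≫ q) :
    D.d A ≤ D.reidx f₁ f₂ (D.kernelOf q) := by
  have hgr : D.reidx f₁ (f₁ ≫ q) (D.gr q) = D.reidx (f₁ ≫ q) (f₁ ≫ q) (D.d Y) := by
    rw [gr, ← reidx_comp, Category.comp_id]
  have hconv : D.reidx (f₁ ≫ q) f₂ (D.conv (D.gr q)) = D.reidx (f₁ ≫ q) (f₁ ≫ q) (D.d Y) := by
    rw [conv_gr, ← reidx_comp, Category.comp_id, h]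
  calc D.d A = D.comp (D.d A) (D.d A) := (D.d_comp _).symm
    _ ≤ D.comp (D.reidx f₁ (f₁ ≫ q) (D.gr q)) (D.reidx (f₁ ≫ q) f₂ (D.conv (D.gr q))) := by
        rw [hgr, hconv]
        exact D.comp_mono (D.d_le_reidx _) (D.d_le_reidx _)
    _ ≤ D.reidx f₁ f₂ (D.kernelOf q) := D.comp_reidx_le _ _ _ _ _

theorem rExtEq_comp_of_kernelOf_le {A X Y Z : C} {q : X ⟶ Y} {f : X ⟶ Z}
    (hker : D.kernelOf q ≤ D.kernelOf f) {f₁ f₂ : A ⟶ X} (h : f₁ ≫ q = f₂ ≫ q) :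
    D.RExtEq (f₁ ≫ f) (f₂ ≫ f) :=
  calc D.d A ≤ D.reidx f₁ f₂ (D.kernelOf q) := D.d_le_reidx_kernelOf h
    _ ≤ D.reidx f₁ f₂ (D.reidx f f (D.d Z)) :=
        D.reidx_mono _ _ (hker.trans (D.kernelOf_le_reidx f))
    _ = D.reidx (f₁ ≫ f) (f₂ ≫ f) (D.d Z) := (D.reidx_comp _ _ _ _ _).symm

/-- The factorisation of `f` through `q` is `s ≫ f`; extensionality turns the
`R`-equality `f ≐ q ≫ s ≫ f` into an equation. -/
theorem isQuotientArrow_kernelOf_of_comp_eq_id (hext : D.Extensional) {X Y : C} {q : X ⟶ Y}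
    {s : Y ⟶ X} (hs : s ≫ q = 𝟙 Y) : D.IsQuotientArrow (D.kernelOf q) q := by
  refine ⟨le_rfl, fun Z f hker => ⟨s ≫ f, ?_, fun h hf => ?_⟩⟩
  · have hq : 𝟙 X ≫ q = (q ≫ s) ≫ q := by simp [hs]
    simpa using hext _ _ _ _ (D.rExtEq_comp_of_kernelOf_le hker hq)
  · rw [hf, ← Category.assoc, hs, Category.id_comp]

end RelDoctrine

variable {C : Type u} [Category.{v} C] {P : C → C → Type w} [∀ X Y : C, PartialOrder (P X Y)]

/-- In an extensional relational doctrine, split effective descent quotient arrows are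
exactly the split surjective arrows. -/
theorem statement13 (D : RelDoctrine C P) (hext : D.Extensional) {X Y : C} (q : X ⟶ Y) :
    ((∃ s : Y ⟶ X, s ≫ q = 𝟙 Y) ∧ D.IsQuotientArrow (D.kernelOf q) q ∧
        D.Effective (D.kernelOf q) q ∧ D.Descent q) ↔
      ((∃ s : Y ⟶ X, s ≫ q = 𝟙 Y) ∧ D.SurjectiveRel (D.gr q)) := by
  constructor
  · rintro ⟨hsplit, -, -, hdescent⟩
    exact ⟨hsplit, hdescent⟩
  · rintro ⟨⟨s, hs⟩, hsurj⟩
    exact ⟨⟨s, hs⟩, D.isQuotientArrow_kernelOf_of_comp_eq_id hext hs, rfl, hsurj⟩
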